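/- If n is even and H = |b⟩⟨b̄| + |b̄⟩⟨b| where b ∈ {0,1}^n has Hamming weight n/2 and b̄ is its bitwise complement, then for θ ≠ 0 mod 2π the unitary V = exp(iθH) satisfies det(V^(n/2,+)) = e^{iθ} and det(V^(n/2,−)) = e^{−iθ}, where V^(n/2,±) are the restrictions of V to the intersections of the Hamming-weight-n/2 sector with the ±1 eigenspaces of X^{⊗n}; in particular V is not a product of exponentials exp(iα R_{ij}) of XY interactions. -/

import Mathlib

open Matrix
open scoped BigOperators

noncomputable section

/-- Computational basis states of `n` qubits: bit strings of length `n`. -/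
abbrev QState (n : ℕ) := Fin n → Fin 2

/-- Matrices on the `n`-qubit Hilbert space `(ℂ²)^⊗n`, written in the computational basis. -/
abbrev QMat (n : ℕ) := Matrix (QState n) (QState n) ℂ

/-- Matrix exponential, defined by its power series. -/
def mexp {m : Type*} [Fintype m] [DecidableEq m] (A : Matrix m m ℂ) : Matrix m m ℂ :=
  ∑' k : ℕ, ((k.factorial : ℂ)⁻¹) • A ^ k

/-- Hamming weight of a bit string. -/
def hamWeight {n : ℕ} (b : QState n) : ℕ := ∑ j, (b j : ℕ)

/-- Bitwise negation of a bit string. -/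
def bflip {n : ℕ} (b : QState n) : QState n := fun j => b j + 1

/-- The operator `X^{⊗n}` flipping all qubits. -/
def XallMat (n : ℕ) : QMat n := fun b b' => if b' = bflip b then 1 else 0

/-- The projector `Π^(m)` onto the span of computational basis states of Hamming weight `m`. -/
def ProjW (n m : ℕ) : QMat n :=
  Matrix.diagonal (fun b => if hamWeight b = m then 1 else 0)

/-- The eigenvalue `±1` of Pauli `Z` on a single-qubit basis label. -/
def zval : Fin 2 → ℂ := fun x => if x = 0 then 1 else -1

/-- Pauli `Z` acting on qubit `j` (tensored with identity elsewhere). -/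
def Zmat (n : ℕ) (j : Fin n) : QMat n := Matrix.diagonal (fun b => zval (b j))

/-- The total Hamiltonian `Σ_j Z_j`. -/
def sumZ (n : ℕ) : QMat n := ∑ j, Zmat n j

/-- The XY interaction `R_{ij} = (X_i X_j + Y_i Y_j)/2 = |01⟩⟨10| + |10⟩⟨01|` on
qubits `i, j`, tensored with identity elsewhere. -/
def Rmat (n : ℕ) (i j : Fin n) : QMat n := fun b b' =>
  if b i ≠ b j ∧ b' i = b j ∧ b' j = b i ∧ (∀ k, k ≠ i → k ≠ j → b' k = b k) then 1 else 0

/-- The determinant of (the block of) `A` on the range of a projector `P`,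
computed as `det (P A P + (1 − P))`. -/
def sectorDet {ι : Type*} [Fintype ι] [DecidableEq ι] (P A : Matrix ι ι ℂ) : ℂ :=
  (P * A * P + (1 - P)).det

/-!
On matrices commuting with a projector `P`, `A ↦ det (P A P + 1 - P)` is multiplicative. Every
`R_{ij}` commutes with the projector `P₊` onto the sector of `V^(n/2,+)`, and for a third qubit `k`
the involution `Z_i Z_k` commutes with `P₊` and anticommutes with `R_{ij}`. Conjugating by it sends
`exp (iαR_{ij}/2)` to its inverse, which forces the sector determinant of `exp (iαR_{ij})` to be `1`.
On the other hand `H = Q₊ - Q₋` for the orthogonal projectors `Q_±` onto `|b⟩ ± |b̄⟩`, so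
`V = 1 + (e^{iθ} - 1) Q₊ + (e^{-iθ} - 1) Q₋`, and `P_±` fixes `Q_±` and kills `Q_∓`: the sector
determinants are `e^{±iθ}`, and `e^{iθ} ≠ 1`.
-/

open Matrix

section General

variable {ι : Type*} [Fintype ι] [DecidableEq ι]

lemma mexp_eq_exp (A : Matrix ι ι ℂ) : mexp A = NormedSpace.exp A := by
  rw [NormedSpace.exp_eq_tsum ℂ]; rfl

lemma mexp_add_of_commute {A B : Matrix ι ι ℂ} (h : Commute A B) :
    mexp (A + B) = mexp A * mexp B := by
  simp only [mexp_eq_exp]; exact exp_add_of_commute A B h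

lemma Commute.mexp_left {A B : Matrix ι ι ℂ} (h : Commute A B) : Commute (mexp A) B := by
  rw [mexp_eq_exp]; exact h.exp_left

lemma mexp_conj_of_mul_self_eq_one {S : Matrix ι ι ℂ} (hS : S * S = 1) (A : Matrix ι ι ℂ) :
    mexp (S * A * S) = S * mexp A * S := by
  simp only [mexp_eq_exp]
  exact exp_units_conj ⟨S, S, hS, hS⟩ A

lemma mexp_smul_of_isIdempotentElem {F : Matrix ι ι ℂ} (hF : IsIdempotentElem F) (c : ℂ) :
    mexp (c • F) = 1 + (Complex.exp c - 1) • F := by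
  -- `F ^ k = F + 0 ^ k • (1 - F)` splits the exponential series into two scalar ones.
  have hpow (k : ℕ) : (c • F) ^ k = c ^ k • F + (0 : ℂ) ^ k • (1 - F) := by
    rcases k with _ | k
    · simp
    · simp [smul_pow, hF.pow_succ_eq]
  have hsum (x : ℂ) (G : Matrix ι ι ℂ) :
      HasSum (fun k : ℕ => ((k.factorial : ℂ)⁻¹ * x ^ k) • G) (Complex.exp x • G) := by
    rw [Complex.exp_eq_exp_ℂ]
    simpa only [smul_eq_mul] using (NormedSpace.exp_series_hasSum_exp' (𝕂 := ℂ) x).smul_const G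
  have h := (hsum c F).add (hsum 0 (1 - F))
  rw [Complex.exp_zero, one_smul] at h
  rw [mexp, sub_smul, one_smul, add_sub_left_comm, ← h.tsum_eq]
  congr 1; funext k
  rw [hpow, smul_add, smul_smul, smul_smul]

lemma mexp_smul_add_smul_of_orthogonal {F G : Matrix ι ι ℂ} (hF : IsIdempotentElem F)
    (hG : IsIdempotentElem G) (hFG : F * G = 0) (hGF : G * F = 0) (x y : ℂ) :
    mexp (x • F + y • G) = 1 + (Complex.exp x - 1) • F + (Complex.exp y - 1) • G := by
  have hcomm : Commute (x • F) (y • G) := by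
    simp only [Commute, SemiconjBy, smul_mul_smul_comm, hFG, hGF, smul_zero]
  rw [mexp_add_of_commute hcomm, mexp_smul_of_isIdempotentElem hF,
    mexp_smul_of_isIdempotentElem hG, mul_add, mul_one, add_mul, one_mul,
    smul_mul_smul_comm, hFG, smul_zero, add_zero]

lemma Matrix.det_one_add_smul_vecMulVec (x : ℂ) (u v : ι → ℂ) :
    (1 + x • vecMulVec u v).det = 1 + x * (v ⬝ᵥ u) := by
  rw [← smul_vecMulVec, vecMulVec_eq Unit, det_one_add_replicateCol_mul_replicateRow,
    dotProduct_smul, smul_eq_mul]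

lemma Matrix.commute_diagonal_of_apply_ne_zero {w : ι → ℂ} {A : Matrix ι ι ℂ}
    (h : ∀ c c', A c c' ≠ 0 → w c = w c') : Commute (diagonal w) A := by
  ext c c'
  rw [diagonal_mul, mul_diagonal]
  by_cases hA : A c c' = 0
  · simp [hA]
  · rw [h c c' hA, mul_comm]

lemma Matrix.diagonal_mul_eq_neg_mul_diagonal_of_apply_ne_zero {w : ι → ℂ}
    {A : Matrix ι ι ℂ} (h : ∀ c c', A c c' ≠ 0 → w c' = -w c) : diagonal w * A = -(A * diagonal w) := by
  ext c c'
  rw [diagonal_mul, neg_apply, mul_diagonal]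
  by_cases hA : A c c' = 0
  · simp [hA]
  · rw [h c c' hA, mul_neg, neg_neg, mul_comm]

section sectorDet

variable {P : Matrix ι ι ℂ}

lemma sectorDet_one (hP : IsIdempotentElem P) : sectorDet P 1 = 1 := by
  rw [sectorDet, mul_one, hP.eq, add_sub_cancel, det_one]

lemma sectorDet_of_commute {A : Matrix ι ι ℂ} (hP : IsIdempotentElem P) (hA : Commute A P) :
    sectorDet P A = (A * P + (1 - P)).det := by
  rw [sectorDet, ← hA.eq, mul_assoc, hP.eq]

lemma sectorDet_mul {A B : Matrix ι ι ℂ} (hP : IsIdempotentElem P) (hA : Commute A P)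
    (hB : Commute B P) : sectorDet P (A * B) = sectorDet P A * sectorDet P B := by
  rw [sectorDet_of_commute hP hA, sectorDet_of_commute hP hB,
    sectorDet_of_commute hP (hA.mul_left hB), ← det_mul]
  congr 1
  have hPB : P * (B * P) = B * P := by rw [← mul_assoc, ← hB.eq, mul_assoc, hP.eq]
  have hQB : (1 - P) * (B * P) = 0 := by rw [hB.eq, ← mul_assoc, hP.one_sub_mul_self, zero_mul]
  rw [mul_add, add_mul, add_mul, mul_assoc A P, hPB, mul_assoc A P, hP.mul_one_sub_self, mul_zero,
    hQB, hP.one_sub.eq, ← mul_assoc, add_zero, zero_add]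

lemma sectorDet_list_prod_eq_one (hP : IsIdempotentElem P) (l : List (Matrix ι ι ℂ))
    (hl : ∀ A ∈ l, Commute A P ∧ sectorDet P A = 1) : sectorDet P l.prod = 1 := by
  induction l with
  | nil => exact sectorDet_one hP
  | cons A l ih =>
    simp only [List.mem_cons, forall_eq_or_imp] at hl
    rw [List.prod_cons, sectorDet_mul hP hl.1.1 (Commute.list_prod_left _ _ fun B hB =>
      (hl.2 B hB).1), hl.1.2, ih hl.2, one_mul]

lemma sectorDet_one_add_smul_add_smul {F G : Matrix ι ι ℂ} (hP : IsIdempotentElem P)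
    (hPF : P * F = F) (hFP : F * P = F) (hPG : P * G = 0) (x y : ℂ) :
    sectorDet P (1 + x • F + y • G) = (1 + x • F).det := by
  rw [sectorDet]
  congr 1
  simp only [mul_add, add_mul, mul_one, mul_smul_comm, smul_mul_assoc, hPF, hFP, hPG,
    hP.eq, smul_zero, add_zero]
  abel

lemma sectorDet_mexp_eq_one_of_anticommute {A S : Matrix ι ι ℂ} (hP : IsIdempotentElem P)
    (hAP : Commute A P) (hS : S * S = 1) (hSP : Commute S P) (hSA : S * A = -(A * S)) :
    sectorDet P (mexp A) = 1 := by
  -- Conjugation by `S` turns `g = exp (A / 2)` into `g⁻¹`, so both have the same sector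
  -- determinant, whose square is then that of `g * g⁻¹ = 1`.
  set g := mexp ((2 : ℂ)⁻¹ • A)
  set g' := mexp (-((2 : ℂ)⁻¹ • A))
  have hg : Commute g P := (hAP.smul_left _).mexp_left
  have hg' : Commute g' P := (hAP.smul_left _).neg_left.mexp_left
  have hgg : mexp A = g * g := by
    rw [← mexp_add_of_commute (Commute.refl _), ← add_smul]; norm_num
  have hgg' : g * g' = 1 := by
    rw [← mexp_add_of_commute (Commute.refl ((2 : ℂ)⁻¹ • A)).neg_right, add_neg_cancel,
      mexp_eq_exp, NormedSpace.exp_zero]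
  have hconj : g' = S * g * S := by
    rw [← mexp_conj_of_mul_self_eq_one hS, mul_smul_comm, smul_mul_assoc, hSA, neg_mul, mul_assoc,
      hS, mul_one, smul_neg]
  have hdet : sectorDet P g' = sectorDet P g := by
    rw [hconj, sectorDet_mul hP (hSP.mul_left hg) hSP, sectorDet_mul hP hSP hg, mul_right_comm,
      ← sectorDet_mul hP hSP hSP, hS, sectorDet_one hP, one_mul]
  calc sectorDet P (mexp A) = sectorDet P g * sectorDet P g := by rw [hgg, sectorDet_mul hP hg hg]
    _ = sectorDet P (g * g') := by rw [sectorDet_mul hP hg hg', hdet]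
    _ = 1 := by rw [hgg', sectorDet_one hP]

end sectorDet

end General

section Qubits

variable {n : ℕ}

lemma bflip_involutive : Function.Involutive (bflip (n := n)) := by
  intro c
  funext k
  have h (x : Fin 2) : x + 1 + 1 = x := by revert x; decide
  exact h (c k)

lemma bflip_ne (hn : n ≠ 0) (c : QState n) : bflip c ≠ c := by
  have h (x : Fin 2) : x + 1 ≠ x := by revert x; decide
  exact fun hc => h _ (congrFun hc ⟨0, Nat.pos_of_ne_zero hn⟩)

lemma hamWeight_add_hamWeight_bflip (c : QState n) : hamWeight c + hamWeight (bflip c) = n := by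
  have h (x : Fin 2) : (x : ℕ) + ((x + 1 : Fin 2) : ℕ) = 1 := by revert x; decide
  simp [hamWeight, bflip, ← Finset.sum_add_distrib, h]

lemma hamWeight_bflip_eq_half_iff (hev : Even n) (c : QState n) :
    hamWeight (bflip c) = n / 2 ↔ hamWeight c = n / 2 := by
  have := hamWeight_add_hamWeight_bflip c
  obtain ⟨m, rfl⟩ := hev
  omega

lemma hamWeight_comp_perm (c : QState n) (σ : Equiv.Perm (Fin n)) :
    hamWeight (c ∘ σ) = hamWeight c :=
  Equiv.sum_comp σ (fun k => (c k : ℕ))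

lemma XallMat_mul_apply (A : QMat n) (c c' : QState n) :
    (XallMat n * A) c c' = A (bflip c) c' := by
  simp [mul_apply, XallMat]

lemma eq_bflip_comm {c c' : QState n} : c' = bflip c ↔ c = bflip c' := by
  rw [eq_comm, bflip_involutive.eq_iff]

lemma mul_XallMat_apply (A : QMat n) (c c' : QState n) :
    (A * XallMat n) c c' = A c (bflip c') := by
  simp only [mul_apply, XallMat, mul_ite, mul_one, mul_zero]
  rw [Finset.sum_congr rfl fun j _ => if_congr eq_bflip_comm rfl rfl]
  simp

lemma XallMat_mulVec (f : QState n → ℂ) : XallMat n *ᵥ f = f ∘ bflip := by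
  funext c
  simp [mulVec, dotProduct, XallMat]

lemma XallMat_mul_self : XallMat n * XallMat n = 1 := by
  ext c c'
  simp [XallMat_mul_apply, XallMat, one_apply, bflip_involutive c, eq_comm]

lemma XallMat_transpose : (XallMat n)ᵀ = XallMat n := by
  ext c c'
  simp [XallMat, eq_bflip_comm]

lemma commute_XallMat_of_apply_bflip {A : QMat n}
    (h : ∀ c c', A (bflip c) (bflip c') = A c c') : Commute A (XallMat n) := by
  ext c c'
  rw [mul_XallMat_apply, XallMat_mul_apply, ← h c (bflip c'), bflip_involutive]

lemma commute_diagonal_XallMat {w : QState n → ℂ} (hw : ∀ c, w (bflip c) = w c) :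
    Commute (diagonal w) (XallMat n) :=
  commute_XallMat_of_apply_bflip fun c c' => by
    simp only [diagonal_apply, bflip_involutive.injective.eq_iff, hw]

lemma commute_ProjW_XallMat (hev : Even n) : Commute (ProjW n (n / 2)) (XallMat n) :=
  commute_diagonal_XallMat fun c => by simp only [hamWeight_bflip_eq_half_iff hev]

lemma commute_ProjW_smul_one_add_smul_XallMat (hev : Even n) (s : ℂ) :
    Commute (ProjW n (n / 2)) ((2 : ℂ)⁻¹ • (1 + s • XallMat n)) :=
  ((Commute.one_right _).add_right ((commute_ProjW_XallMat hev).smul_right s)).smul_right _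

lemma isIdempotentElem_ProjW (m : ℕ) : IsIdempotentElem (ProjW n m) := by
  rw [IsIdempotentElem, ProjW, diagonal_mul_diagonal]
  congr 1; funext c
  split_ifs <;> simp

/-- For `s = ±1`, the projector onto the sector of `V^(n/2,s)`. -/
def sectorProj (n : ℕ) (s : ℂ) : QMat n :=
  ProjW n (n / 2) * ((2 : ℂ)⁻¹ • (1 + s • XallMat n))

lemma sectorProj_one : sectorProj n 1 = ProjW n (n / 2) * ((2 : ℂ)⁻¹ • (1 + XallMat n)) := by
  rw [sectorProj, one_smul]

lemma sectorProj_neg_one :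
    sectorProj n (-1) = ProjW n (n / 2) * ((2 : ℂ)⁻¹ • (1 - XallMat n)) := by
  rw [sectorProj, neg_one_smul, sub_eq_add_neg]

lemma Commute.sectorProj_right {A : QMat n} (hW : Commute A (ProjW n (n / 2)))
    (hX : Commute A (XallMat n)) (s : ℂ) : Commute A (sectorProj n s) :=
  hW.mul_right (((Commute.one_right A).add_right (hX.smul_right s)).smul_right _)

lemma isIdempotentElem_sectorProj (hev : Even n) {s : ℂ} (hs : s * s = 1) :
    IsIdempotentElem (sectorProj n s) := by
  refine (isIdempotentElem_ProjW _).mul_of_commute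
    (commute_ProjW_smul_one_add_smul_XallMat hev s) ?_
  rw [IsIdempotentElem, smul_mul_smul_comm, mul_add, add_mul, add_mul, smul_mul_smul_comm,
    XallMat_mul_self, hs, mul_one, mul_one, one_mul, one_smul]
  module

lemma sectorProj_transpose (hev : Even n) (s : ℂ) : (sectorProj n s)ᵀ = sectorProj n s := by
  rw [sectorProj, transpose_mul, transpose_smul, transpose_add, transpose_smul, transpose_one,
    XallMat_transpose, ProjW, diagonal_transpose, ← ProjW]
  exact (commute_ProjW_smul_one_add_smul_XallMat hev s).eq.symm

def pairVec (b : QState n) (s : ℂ) : QState n → ℂ :=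
  Pi.single b 1 + s • Pi.single (bflip b) 1

/-- For `s = ±1`, the orthogonal projector onto `|b⟩ + s |b̄⟩`. -/
def pairProj (b : QState n) (s : ℂ) : QMat n :=
  vecMulVec (pairVec b s) ((2 : ℂ)⁻¹ • pairVec b s)

def pairSwap (b : QState n) : QMat n := fun c c' =>
  if (c = b ∧ c' = bflip b) ∨ (c = bflip b ∧ c' = b) then 1 else 0

section pair

variable {b : QState n}

lemma pairVec_comp_bflip {s : ℂ} (hs : s * s = 1) :
    pairVec b s ∘ bflip = s • pairVec b s := by
  have hsingle : (Pi.single b 1 : QState n → ℂ) ∘ bflip = Pi.single (bflip b) 1 := by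
    funext c
    simp [Pi.single_apply, bflip_involutive.eq_iff]
  have hsingle' : (Pi.single (bflip b) 1 : QState n → ℂ) ∘ bflip = Pi.single b 1 := by
    rw [← hsingle, Function.comp_assoc, bflip_involutive.comp_self, Function.comp_id]
  rw [pairVec, Pi.add_comp, Pi.smul_comp, hsingle, hsingle', smul_add, smul_smul, hs, one_smul,
    add_comm]

lemma dotProduct_pairVec (hb : bflip b ≠ b) (s t : ℂ) :
    pairVec b s ⬝ᵥ pairVec b t = 1 + s * t := by
  simp [pairVec, dotProduct_add, hb, hb.symm, mul_comm]

lemma ProjW_mulVec_pairVec (hev : Even n) (hb : hamWeight b = n / 2) (s : ℂ) :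
    ProjW n (n / 2) *ᵥ pairVec b s = pairVec b s := by
  have hb' : hamWeight (bflip b) = n / 2 := (hamWeight_bflip_eq_half_iff hev b).2 hb
  funext c
  rw [ProjW, mulVec_diagonal]
  by_cases hc : hamWeight c = n / 2
  · rw [if_pos hc, one_mul]
  · have hcb : c ≠ b := by rintro rfl; exact hc hb
    have hcb' : c ≠ bflip b := by rintro rfl; exact hc hb'
    simp [pairVec, hc, hcb, hcb']

lemma sectorProj_mulVec_pairVec (hev : Even n) (hb : hamWeight b = n / 2) {t : ℂ}
    (ht : t * t = 1) (s : ℂ) :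
    sectorProj n s *ᵥ pairVec b t = (2⁻¹ * (1 + s * t)) • pairVec b t := by
  rw [sectorProj, ← mulVec_mulVec, smul_mulVec, add_mulVec, one_mulVec, smul_mulVec,
    XallMat_mulVec, pairVec_comp_bflip ht, mulVec_smul, mulVec_add, mulVec_smul, mulVec_smul,
    ProjW_mulVec_pairVec hev hb]
  module

lemma sectorProj_mul_pairProj (hev : Even n) (hb : hamWeight b = n / 2) {t : ℂ}
    (ht : t * t = 1) (s : ℂ) :
    sectorProj n s * pairProj b t = (2⁻¹ * (1 + s * t)) • pairProj b t := by
  rw [pairProj, mul_vecMulVec, sectorProj_mulVec_pairVec hev hb ht, smul_vecMulVec]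

lemma pairProj_mul_sectorProj (hev : Even n) (hb : hamWeight b = n / 2) {t : ℂ}
    (ht : t * t = 1) (s : ℂ) :
    pairProj b t * sectorProj n s = (2⁻¹ * (1 + s * t)) • pairProj b t := by
  rw [pairProj, vecMulVec_mul, smul_vecMul, ← mulVec_transpose, sectorProj_transpose hev,
    sectorProj_mulVec_pairVec hev hb ht, smul_comm, vecMulVec_smul]

lemma pairProj_mul_pairProj (hb : bflip b ≠ b) (s t : ℂ) :
    pairProj b s * pairProj b t =
      (2⁻¹ * (1 + s * t)) • vecMulVec (pairVec b s) ((2 : ℂ)⁻¹ • pairVec b t) := by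
  rw [pairProj, pairProj, vecMulVec_mul_vecMulVec, smul_dotProduct, dotProduct_pairVec hb,
    vecMulVec_smul, smul_eq_mul]

lemma isIdempotentElem_pairProj (hb : bflip b ≠ b) {s : ℂ} (hs : s * s = 1) :
    IsIdempotentElem (pairProj b s) := by
  rw [IsIdempotentElem, pairProj_mul_pairProj hb, hs, pairProj]
  norm_num

lemma pairProj_mul_pairProj_neg (hb : bflip b ≠ b) {s : ℂ} (hs : s * s = 1) :
    pairProj b s * pairProj b (-s) = 0 := by
  rw [pairProj_mul_pairProj hb, mul_neg, hs]
  norm_num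

lemma pairSwap_eq (hb : bflip b ≠ b) {s : ℂ} (hs : s * s = 1) :
    pairSwap b = s • (pairProj b s - pairProj b (-s)) := by
  ext c c'
  simp only [pairSwap, pairProj, pairVec, Matrix.smul_apply, Matrix.sub_apply, vecMulVec_apply,
    Pi.add_apply, Pi.smul_apply, Pi.single_apply, smul_eq_mul]
  by_cases h1 : c = b <;> by_cases h2 : c = bflip b <;> by_cases h3 : c' = b <;>
    by_cases h4 : c' = bflip b <;> simp [h1, h2, h3, h4, hb, hb.symm] <;> linear_combination -hs

lemma sectorDet_sectorProj_mexp_pairSwap (hev : Even n) (hn : n ≠ 0) (hb : hamWeight b = n / 2)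
    {s : ℂ} (hs : s * s = 1) (c : ℂ) :
    sectorDet (sectorProj n s) (mexp (c • pairSwap b)) = Complex.exp (s * c) := by
  have hbb := bflip_ne hn b
  have hs' : -s * -s = 1 := by rw [neg_mul_neg, hs]
  have hsplit : c • pairSwap b = (s * c) • pairProj b s + (-(s * c)) • pairProj b (-s) := by
    rw [pairSwap_eq hbb hs, smul_smul, smul_sub, neg_smul, sub_eq_add_neg, mul_comm]
  have hPQ : sectorProj n s * pairProj b s = pairProj b s := by
    rw [sectorProj_mul_pairProj hev hb hs, hs]; norm_num
  have hQP : pairProj b s * sectorProj n s = pairProj b s := by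
    rw [pairProj_mul_sectorProj hev hb hs, hs]; norm_num
  have hPQ' : sectorProj n s * pairProj b (-s) = 0 := by
    rw [sectorProj_mul_pairProj hev hb hs', mul_neg, hs]; norm_num
  have horth : pairProj b (-s) * pairProj b s = 0 := by
    simpa using pairProj_mul_pairProj_neg hbb hs'
  rw [hsplit, mexp_smul_add_smul_of_orthogonal (isIdempotentElem_pairProj hbb hs)
    (isIdempotentElem_pairProj hbb hs') (pairProj_mul_pairProj_neg hbb hs) horth,
    sectorDet_one_add_smul_add_smul (isIdempotentElem_sectorProj hev hs) hPQ hQP hPQ', pairProj,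
    det_one_add_smul_vecMulVec, smul_dotProduct, dotProduct_pairVec hbb, hs]
  norm_num

end pair

lemma zval_mul_self (x : Fin 2) : zval x * zval x = 1 := by
  fin_cases x <;> norm_num [zval]

lemma zval_add_one (x : Fin 2) : zval (x + 1) = -zval x := by
  fin_cases x <;> simp [zval]

lemma zval_of_ne {x y : Fin 2} (h : x ≠ y) : zval y = -zval x := by
  fin_cases x <;> fin_cases y <;> simp_all [zval]

section XY

variable {i j : Fin n}

lemma Rmat_apply_ne_zero {c c' : QState n} (h : Rmat n i j c c' ≠ 0) :
    c i ≠ c j ∧ c' = c ∘ Equiv.swap i j := by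
  unfold Rmat at h
  split_ifs at h with hc
  · obtain ⟨hij, hi, hj, hk⟩ := hc
    refine ⟨hij, funext fun k => ?_⟩
    rcases eq_or_ne k i with rfl | hki
    · simp [hi]
    rcases eq_or_ne k j with rfl | hkj
    · simp [hj]
    · simp [Equiv.swap_apply_of_ne_of_ne hki hkj, hk k hki hkj]
  · exact absurd rfl h

lemma commute_ProjW_Rmat (m : ℕ) : Commute (ProjW n m) (Rmat n i j) :=
  commute_diagonal_of_apply_ne_zero fun c c' h => by
    rw [(Rmat_apply_ne_zero h).2, hamWeight_comp_perm]

lemma commute_Rmat_XallMat : Commute (Rmat n i j) (XallMat n) :=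
  commute_XallMat_of_apply_bflip fun c c' => by simp [Rmat, bflip]

lemma commute_Rmat_sectorProj (s : ℂ) : Commute (Rmat n i j) (sectorProj n s) :=
  (commute_ProjW_Rmat _).symm.sectorProj_right commute_Rmat_XallMat s

lemma Zmat_mul_Zmat (i k : Fin n) :
    Zmat n i * Zmat n k = diagonal fun c => zval (c i) * zval (c k) :=
  diagonal_mul_diagonal _ _

lemma ZZ_mul_self (i k : Fin n) : Zmat n i * Zmat n k * (Zmat n i * Zmat n k) = 1 := by
  rw [Zmat_mul_Zmat, diagonal_mul_diagonal, ← diagonal_one]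
  congr 1; funext c
  rw [mul_mul_mul_comm, zval_mul_self, zval_mul_self, one_mul]

lemma commute_ZZ_sectorProj (i k : Fin n) (s : ℂ) :
    Commute (Zmat n i * Zmat n k) (sectorProj n s) :=
  ((commute_diagonal _ _).mul_left (commute_diagonal _ _)).sectorProj_right (by
    rw [Zmat_mul_Zmat]
    exact commute_diagonal_XallMat fun c => by simp only [bflip, zval_add_one, neg_mul_neg]) s

lemma ZZ_mul_Rmat {k : Fin n} (hki : k ≠ i) (hkj : k ≠ j) :
    Zmat n i * Zmat n k * Rmat n i j = -(Rmat n i j * (Zmat n i * Zmat n k)) := by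
  rw [Zmat_mul_Zmat]
  refine diagonal_mul_eq_neg_mul_diagonal_of_apply_ne_zero fun c c' h => ?_
  obtain ⟨hij, rfl⟩ := Rmat_apply_ne_zero h
  simp [Equiv.swap_apply_of_ne_of_ne hki hkj, zval_of_ne hij]

lemma sectorDet_sectorProj_mexp_Rmat (hev : Even n) (hn : 2 < n) {s : ℂ} (hs : s * s = 1)
    (c : ℂ) : sectorDet (sectorProj n s) (mexp (c • Rmat n i j)) = 1 := by
  obtain ⟨k, hki, hkj⟩ := Fin.exists_ne_and_ne_of_two_lt i j hn
  refine sectorDet_mexp_eq_one_of_anticommute (isIdempotentElem_sectorProj hev hs)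
    ((commute_Rmat_sectorProj s).smul_left c) (ZZ_mul_self i k) (commute_ZZ_sectorProj i k s) ?_
  rw [mul_smul_comm, ZZ_mul_Rmat hki hkj, smul_mul_assoc, smul_neg]

end XY

end Qubits

/-- **2-level half-filled-sector unitaries violate the extra determinant constraint.**
Let `n ≥ 3` be even and `b` a bit string of Hamming weight `n/2`, with bitwise
complement `b̄`. Let `H = |b⟩⟨b̄| + |b̄⟩⟨b|` and `V = exp(iθH)` with `θ ≠ 0 mod 2π`.
Then the determinant of `V` restricted to the intersection of the Hamming-weight-`n/2`
sector with the `±1` eigenspace of `X^{⊗n}` equals `e^{±iθ}`; in particular `V` is not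
a finite product of exponentials `exp(iα R_{ij})` of XY interactions. -/
theorem half_filled_two_level_not_XY_realizable
    (n : ℕ) (hn : 3 ≤ n) (hev : Even n)
    (b : QState n) (hb : hamWeight b = n / 2)
    (θ : ℝ) (hθ : ∀ k : ℤ, θ ≠ k * (2 * Real.pi))
    (H : QMat n)
    (hH : H = fun c c' =>
      if (c = b ∧ c' = bflip b) ∨ (c = bflip b ∧ c' = b) then 1 else 0)
    (V : QMat n) (hVdef : V = mexp ((Complex.I * θ) • H)) :
    sectorDet (ProjW n (n / 2) * ((2 : ℂ)⁻¹ • ((1 : QMat n) + XallMat n))) V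
        = Complex.exp (Complex.I * θ) ∧
    sectorDet (ProjW n (n / 2) * ((2 : ℂ)⁻¹ • ((1 : QMat n) - XallMat n))) V
        = Complex.exp (-(Complex.I * θ)) ∧
    ¬ ∃ L : List (ℝ × Fin n × Fin n),
        (∀ x ∈ L, x.2.1 ≠ x.2.2) ∧
        (L.map (fun x => mexp ((Complex.I * x.1) • Rmat n x.2.1 x.2.2))).prod = V := by
  obtain rfl : H = pairSwap b := hH
  subst hVdef
  have hn0 : n ≠ 0 := by omega
  have hone : (1 : ℂ) * 1 = 1 := one_mul 1
  have hplus := sectorDet_sectorProj_mexp_pairSwap hev hn0 hb hone (Complex.I * θ)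
  have hminus := sectorDet_sectorProj_mexp_pairSwap hev hn0 hb (by norm_num : (-1 : ℂ) * -1 = 1)
    (Complex.I * θ)
  rw [one_mul, sectorProj_one] at hplus
  rw [neg_one_mul, sectorProj_neg_one] at hminus
  refine ⟨hplus, hminus, ?_⟩
  rintro ⟨L, -, hL⟩
  have hprod : sectorDet (sectorProj n 1)
      (L.map fun x => mexp ((Complex.I * x.1) • Rmat n x.2.1 x.2.2)).prod = 1 :=
    sectorDet_list_prod_eq_one (isIdempotentElem_sectorProj hev hone) _ <| List.forall_mem_map.2
      fun _ _ => ⟨((commute_Rmat_sectorProj 1).smul_left _).mexp_left,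
        sectorDet_sectorProj_mexp_Rmat hev hn hone _⟩
  rw [hL, sectorProj_one, hplus, Complex.exp_eq_one_iff] at hprod
  obtain ⟨k, hk⟩ := hprod
  exact hθ k (by simpa using congrArg Complex.im hk)

end
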